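/- Let (T_-, T_+) be a reduced tree pair diagram, each tree having m+1 carets, representing w in Thompson's group F, and let α be one of the generators x_0^{±1}, x_1^{±1}. Suppose: if α = x_0 the left subtree of the root of T_- is nonempty; if α = x_0^{-1} the right subtree of the root of T_- is nonempty; if α = x_1 the left subtree of the right child of the root of T_- is nonempty; if α = x_1^{-1} the right subtree of the right child of the root of T_- is nonempty. If the reduced tree pair diagram for wα also has m+1 carets, then there is exactly one index i with 0 ≤ i ≤ m such that the pair of caret types of caret number i changes when passing from the pair for w to the pair for wα. -/

import Mathlib

/-!
Combinatorial properties of Thompson's group F (Cleary–Taback).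

Common definitions: finite rooted binary trees, leaf exponents, reduced tree
pair diagrams, Fordham's caret types and weights, Thompson's group `F` as the
presented group on `x₀, x₁`, the infinite family of generators `x n`, word
length with respect to `{x₀, x₁}`, and the element of `F` represented by a
tree pair diagram.
-/

noncomputable section

namespace Thompson

/-- Finite rooted binary trees; a `node` is a caret. -/
inductive BinTree : Type
  | leaf : BinTree
  | node : BinTree → BinTree → BinTree
  deriving DecidableEq

namespace BinTree

/-- Number of carets (internal nodes). -/
def numCarets : BinTree → ℕ
  | .leaf => 0
  | .node l r => numCarets l + numCarets r + 1

/-- Number of exposed leaves. -/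
def numLeaves : BinTree → ℕ
  | .leaf => 1
  | .node l r => numLeaves l + numLeaves r

/-- The left subtree of the root (a leaf if the tree is a leaf). -/
def leftSubtree : BinTree → BinTree
  | .leaf => .leaf
  | .node l _ => l

/-- The right subtree of the root (a leaf if the tree is a leaf). -/
def rightSubtree : BinTree → BinTree
  | .leaf => .leaf
  | .node _ r => r

/-- Helper for `exps`: leaf exponents of a subtree hanging by a left edge,
where maximal left-edge paths may also use the edge from this subtree's root
to its parent. -/
def expsAux : BinTree → List ℕ
  | .leaf => [0]
  | .node l r =>
      (match expsAux l with
        | [] => []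
        | a :: as => (a + 1) :: as) ++ expsAux r

/-- The list of leaf exponents `E(0), …, E(m)`: `E(k)` is the length of the
maximal path of left edges from leaf `k` that does not reach the right side
of the tree. -/
def exps : BinTree → List ℕ
  | .leaf => [0]
  | .node l r => expsAux l ++ exps r

/-- The indices `m` such that the exposed leaves numbered `m` and `m+1` are
the two leaves of a single caret. -/
def exposedCaretPairs : BinTree → List ℕ
  | .leaf => []
  | .node .leaf .leaf => [0]
  | .node l r => exposedCaretPairs l ++ (exposedCaretPairs r).map (· + numLeaves l)

/-- The smallest leaf number occurring in the right subtree of the root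
(leaves are numbered from `0` left to right, so this is the number of leaves
of the left subtree of the root). -/
def minRightLeaf (T : BinTree) : ℕ := T.leftSubtree.numLeaves

/-- A tree all of whose non-root carets are right carets. -/
def IsRightVine : BinTree → Prop
  | .leaf => True
  | .node l r => l = .leaf ∧ IsRightVine r

end BinTree

open BinTree

/-- `(T₋, T₊)` is a reduced tree pair diagram: the two trees have the same
number of carets and there is no index `m` such that in both trees the
exposed leaves numbered `m` and `m+1` are the two leaves of a single caret. -/
def IsReducedPair (Tm Tp : BinTree) : Prop :=
  Tm.numCarets = Tp.numCarets ∧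
    ∀ m : ℕ, ¬(m ∈ exposedCaretPairs Tm ∧ m ∈ exposedCaretPairs Tp)

/-- Position of a caret: on the left side of the tree (the root counts as a
left caret), on the right side, or interior. -/
inductive CaretPos : Type
  | left | right | interior
  deriving DecidableEq

/-- Infix-ordered list of `(position, has right child)` for the carets of a
subtree all of whose carets are interior. -/
def interiorInfo : BinTree → List (CaretPos × Bool)
  | .leaf => []
  | .node l r =>
      interiorInfo l ++ (CaretPos.interior, decide (r ≠ BinTree.leaf)) :: interiorInfo r

/-- Infix information for a subtree hanging on the left side of the tree. -/
def leftInfo : BinTree → List (CaretPos × Bool)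
  | .leaf => []
  | .node l r =>
      leftInfo l ++ (CaretPos.left, decide (r ≠ BinTree.leaf)) :: interiorInfo r

/-- Infix information for a subtree hanging on the right side of the tree. -/
def rightInfo : BinTree → List (CaretPos × Bool)
  | .leaf => []
  | .node l r =>
      interiorInfo l ++ (CaretPos.right, decide (r ≠ BinTree.leaf)) :: rightInfo r

/-- Infix-ordered list of `(position, has right child)` over all carets of a
tree; the root counts as a left caret. -/
def infoList : BinTree → List (CaretPos × Bool)
  | .leaf => []
  | .node l r =>
      leftInfo l ++ (CaretPos.left, decide (r ≠ BinTree.leaf)) :: rightInfo r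

/-- The number of left carets of a tree (the root counts as a left caret). -/
def numLeftCarets (T : BinTree) : ℕ := ((infoList T).map Prod.fst).count CaretPos.left

/-- The number of interior carets of a tree. -/
def numInteriorCarets (T : BinTree) : ℕ :=
  ((infoList T).map Prod.fst).count CaretPos.interior

/-- The number of right carets of a tree. -/
def numRightCarets (T : BinTree) : ℕ := ((infoList T).map Prod.fst).count CaretPos.right

/-- Fordham's seven caret types. -/
inductive CaretType : Type
  | L0 | LL | I0 | IR | RI | RNI | R0
  deriving DecidableEq

/-- The type of the caret numbered `i` (infix order), given the infix
information list of the tree. -/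
def typeOf (l : List (CaretPos × Bool)) (i : ℕ) : CaretType :=
  if i = 0 then CaretType.L0
  else
    match l[i]? with
    | some (CaretPos.left, _) => CaretType.LL
    | some (CaretPos.interior, b) => if b then CaretType.IR else CaretType.I0
    | some (CaretPos.right, _) =>
        match l[i + 1]? with
        | some (CaretPos.interior, _) => CaretType.RI
        | _ =>
            if (l.drop (i + 1)).any (fun p => p.1 == CaretPos.interior) then CaretType.RNI
            else CaretType.R0
    | none => CaretType.R0

/-- The type of the caret numbered `i` (infix order) in the tree `T`. -/
def caretTypeAt (T : BinTree) (i : ℕ) : CaretType := typeOf (infoList T) i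

/-- The infix-ordered list of caret types of a tree. -/
def caretTypes (T : BinTree) : List CaretType :=
  (List.range T.numCarets).map (caretTypeAt T)

/-- Fordham's weight of a pair of caret types: the pair `(L₀, L₀)` has weight
`0`, and all other weights are given by Fordham's table. -/
def weight : CaretType → CaretType → ℕ
  | .L0, _ => 0
  | _, .L0 => 0
  | .R0, .R0 => 0 | .R0, .RNI => 2 | .R0, .RI => 2 | .R0, .LL => 1 | .R0, .I0 => 1
  | .R0, .IR => 3
  | .RNI, .R0 => 2 | .RNI, .RNI => 2 | .RNI, .RI => 2 | .RNI, .LL => 1 | .RNI, .I0 => 1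
  | .RNI, .IR => 3
  | .RI, .R0 => 2 | .RI, .RNI => 2 | .RI, .RI => 2 | .RI, .LL => 1 | .RI, .I0 => 3
  | .RI, .IR => 3
  | .LL, .R0 => 1 | .LL, .RNI => 1 | .LL, .RI => 1 | .LL, .LL => 2 | .LL, .I0 => 2
  | .LL, .IR => 2
  | .I0, .R0 => 1 | .I0, .RNI => 1 | .I0, .RI => 3 | .I0, .LL => 2 | .I0, .I0 => 2
  | .I0, .IR => 4
  | .IR, .R0 => 3 | .IR, .RNI => 3 | .IR, .RI => 3 | .IR, .LL => 2 | .IR, .I0 => 4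
  | .IR, .IR => 4

open scoped commutatorElement

/-- The defining relators of Thompson's group `F` in the finite presentation
`⟨x₀, x₁ ∣ [x₀x₁⁻¹, x₀⁻¹x₁x₀], [x₀x₁⁻¹, x₀⁻²x₁x₀²]⟩`. -/
def thompsonRels : Set (FreeGroup (Fin 2)) :=
  {⁅FreeGroup.of (0 : Fin 2) * (FreeGroup.of (1 : Fin 2))⁻¹,
      (FreeGroup.of (0 : Fin 2))⁻¹ * FreeGroup.of (1 : Fin 2) * FreeGroup.of (0 : Fin 2)⁆,
    ⁅FreeGroup.of (0 : Fin 2) * (FreeGroup.of (1 : Fin 2))⁻¹,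
      (FreeGroup.of (0 : Fin 2))⁻¹ * (FreeGroup.of (0 : Fin 2))⁻¹ * FreeGroup.of (1 : Fin 2) * FreeGroup.of (0 : Fin 2) *
        FreeGroup.of (0 : Fin 2)⁆}

/-- Thompson's group `F`. -/
abbrev F : Type := PresentedGroup thompsonRels

/-- The generator `x₀` of `F`. -/
def x0 : F := PresentedGroup.of (0 : Fin 2)

/-- The generator `x₁` of `F`. -/
def x1 : F := PresentedGroup.of (1 : Fin 2)

/-- The generators `x_n` of the infinite presentation:
`x_n = x₀^{-(n-1)} x₁ x₀^{n-1}` for `n ≥ 1`. -/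
def x : ℕ → F
  | 0 => x0
  | n + 1 => (x0 ^ n)⁻¹ * x1 * x0 ^ n

/-- The symmetrized generating set `{x₀^{±1}, x₁^{±1}}` of `F`. -/
def genSet : Set F := {x0, x0⁻¹, x1, x1⁻¹}

/-- The word length of `w ∈ F` with respect to the generating set `{x₀, x₁}`:
the least `n` such that `w` is a product of `n` elements of
`{x₀^{±1}, x₁^{±1}}`. -/
def wordLength (w : F) : ℕ :=
  sInf {n | ∃ l : List F, l.length = n ∧ (∀ g ∈ l, g ∈ genSet) ∧ l.prod = w}

/-- The positive element `x₀^{E(0)} x₁^{E(1)} ⋯ x_m^{E(m)}` of `F` built from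
the leaf exponents of a tree. -/
def posElt (T : BinTree) : F := ((T.exps).zipIdx.map fun p => x p.2 ^ p.1).prod

/-- The element of `F` represented by the tree pair diagram `(T₋, T₊)`:
the positive part comes from the leaf exponents of `T₊` and the negative part
from those of `T₋`. -/
def toF (Tm Tp : BinTree) : F := posElt Tp * (posElt Tm)⁻¹

/-- `x_{i₁}^{r₁} ⋯ x_{i_k}^{r_k}` for a list of indices and exponents. -/
def prodX (idx exps : List ℕ) : F := (List.zipWith (fun i r => x i ^ r) idx exps).prod

/-- The element `x₀^{r₀} x_{i₁}^{r₁} ⋯ x_{i_k}^{r_k} x_{j_l}^{-s_l} ⋯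
x_{j₁}^{-s₁} x₀^{-s₀}` of `F` (normal form with the `x₀`-exponents
separated). -/
def nfElt0 (r0 : ℕ) (is rs js ss : List ℕ) (s0 : ℕ) : F :=
  x0 ^ r0 * prodX is rs * (x0 ^ s0 * prodX js ss)⁻¹

/-- Normal form data `x_{i₁}^{r₁} ⋯ x_{i_k}^{r_k} x_{j_l}^{-s_l} ⋯ x_{j₁}^{-s₁}`:
positive exponents, strictly increasing indices, and the uniqueness condition
that whenever both `x_i` and `x_i⁻¹` occur so does `x_{i+1}` or `x_{i+1}⁻¹`. -/
def IsNF (is rs js ss : List ℕ) : Prop :=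
  is.length = rs.length ∧ js.length = ss.length ∧
    is.Chain' (· < ·) ∧ js.Chain' (· < ·) ∧
    (∀ r ∈ rs, 0 < r) ∧ (∀ s ∈ ss, 0 < s) ∧
    (∀ i : ℕ, i ∈ is → i ∈ js → (i + 1 ∈ is ∨ i + 1 ∈ js))

/-- Normal form data with the `x₀`-exponents separated (without the
uniqueness condition): positive exponents and strictly increasing positive
indices. -/
def IsWeakNF0 (_r0 : ℕ) (is rs js ss : List ℕ) (_s0 : ℕ) : Prop :=
  is.length = rs.length ∧ js.length = ss.length ∧
    is.Chain' (· < ·) ∧ js.Chain' (· < ·) ∧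
    (∀ i ∈ is, 0 < i) ∧ (∀ j ∈ js, 0 < j) ∧
    (∀ r ∈ rs, 0 < r) ∧ (∀ s ∈ ss, 0 < s)

/-- Unique normal form data with the `x₀`-exponents separated: additionally,
whenever both `x_i` and `x_i⁻¹` occur, so does `x_{i+1}` or `x_{i+1}⁻¹`. -/
def IsNF0 (r0 : ℕ) (is rs js ss : List ℕ) (s0 : ℕ) : Prop :=
  IsWeakNF0 r0 is rs js ss s0 ∧
    (0 < r0 → 0 < s0 → (1 ∈ is ∨ 1 ∈ js)) ∧
    (∀ i : ℕ, i ∈ is → i ∈ js → (i + 1 ∈ is ∨ i + 1 ∈ js))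

/-- `w` is strictly positive: its normal form consists entirely of generators
with positive exponents. -/
def IsStrictlyPositive (w : F) : Prop :=
  ∃ is rs : List ℕ, is.length = rs.length ∧ is.Chain' (· < ·) ∧
    (∀ r ∈ rs, 0 < r) ∧ w = prodX is rs

/-- `w` is a dead end element: every generator decreases its word length. -/
def IsDeadEnd (w : F) : Prop :=
  ∀ α ∈ genSet, wordLength (w * α) + 1 = wordLength w

/-- The leaf-exponent function determined by the negative part
`x_{j_l}^{-s_l} ⋯ x_{j₁}^{-s₁} x₀^{-s₀}` of a normal form. -/
def nfExp (s0 : ℕ) (js ss : List ℕ) (k : ℕ) : ℕ :=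
  if k = 0 then s0 else (((js.zip ss).filter fun p => p.1 == k).map Prod.snd).sum

/-- The tree `T` realizes the leaf-exponent function `e`: its leaf exponents
agree with `e`, and `e` vanishes beyond the leaves of `T`. -/
def RealizesExps (T : BinTree) (e : ℕ → ℕ) : Prop :=
  ∀ k : ℕ, ((BinTree.exps T)[k]?).getD 0 = e k

/-- The weights, per caret type, of the nested traversal method. -/
def omegaWeight : CaretType → ℕ
  | .L0 => 0 | .R0 => 0 | .LL => 1 | .I0 => 1 | .RNI => 2 | .RI => 2 | .IR => 3



/-!
Right multiplication by `x₀^{±1}` or `x₁^{±1}` rotates the negative tree at its root or at the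
right child of its root, and the hypothesis on `α` says exactly that this rotation exists. The
rotated tree together with `T₊` is a diagram for `wα` with `m + 1` carets, and so it is the reduced
one: in the action of `F` on Cantor space a diagram `(P, Q)` carries the cylinder of each leaf of
`P` rigidly onto that of the same leaf of `Q`, which makes a reduced diagram the only diagram of
its size for its element. Finally, a rotation moves exactly one caret between the right side of
the tree and the rest, without changing the types of the other carets.
-/

section CaretTypes

variable {l l' P P' S : List (CaretPos × Bool)} {i : ℕ}

def CaretType.IsRight : CaretType → Prop
  | .RI | .RNI | .R0 => True
  | _ => False

lemma typeOf_isRight_iff {e : CaretPos × Bool} (hi : i ≠ 0) (he : l[i]? = some e) :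
    (typeOf l i).IsRight ↔ e.1 = .right := by
  obtain ⟨c, b⟩ := e
  unfold typeOf
  rw [if_neg hi, he]
  cases c
  · simp [CaretType.IsRight]
  · rcases l[i + 1]? with _ | ⟨_ | _ | _, _⟩ <;> dsimp only <;> (try split_ifs) <;>
      simp [CaretType.IsRight]
  · cases b <;> simp [CaretType.IsRight]

lemma typeOf_of_getElem?_left {b : Bool} (he : l[i]? = some (.left, b)) :
    typeOf l i = if i = 0 then .L0 else .LL := by
  unfold typeOf
  by_cases hi : i = 0
  · simp [hi]
  · rw [if_neg hi, if_neg hi, he]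

lemma typeOf_eq_of_getElem?_eq (h : l[i]? = l'[i]?) (hr : ∀ e ∈ l[i]?, e.1 ≠ .right) :
    typeOf l i = typeOf l' i := by
  unfold typeOf
  rw [← h]
  rcases he : l[i]? with _ | ⟨_ | _ | _, b⟩
  · rfl
  · rfl
  · exact absurd rfl (hr _ he)
  · rfl

lemma typeOf_append_congr (hP : P.length = P'.length) (hi : P.length ≤ i) :
    typeOf (P ++ S) i = typeOf (P' ++ S) i := by
  have hi' : P'.length ≤ i := hP ▸ hi
  unfold typeOf
  rw [List.getElem?_append_right hi, List.getElem?_append_right hi',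
    List.getElem?_append_right (by omega), List.getElem?_append_right (by omega),
    List.drop_append, List.drop_append, List.drop_eq_nil_of_le (as := P) (by omega),
    List.drop_eq_nil_of_le (as := P') (by omega), hP]

lemma typeOf_eq_of_lt_of_ne_right {L I X Y : List (CaretPos × Bool)} {d d' : Bool}
    (hL : ∀ e ∈ L, e.1 ≠ .right) (hI : ∀ e ∈ I, e.1 ≠ .right) (hi : i < L.length + 1 + I.length) :
    typeOf (L ++ (.left, d) :: (I ++ X)) i = typeOf (L ++ (.left, d') :: (I ++ Y)) i := by
  rcases lt_trichotomy i L.length with hiL | rfl | hiL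
  · apply typeOf_eq_of_getElem?_eq
    · simp [List.getElem?_append_left hiL]
    · intro e he
      rw [List.getElem?_append_left hiL] at he
      exact hL e (List.mem_of_getElem? he)
  · rw [typeOf_of_getElem?_left (b := d) (by simp), typeOf_of_getElem?_left (b := d') (by simp)]
  · obtain ⟨n, rfl⟩ : ∃ n, i = L.length + 1 + n := ⟨i - L.length - 1, by omega⟩
    have entry : ∀ (b : Bool) (Z : List (CaretPos × Bool)),
        (L ++ (.left, b) :: (I ++ Z))[L.length + 1 + n]? = I[n]? := by
      intro b Z
      rw [List.getElem?_append_right (by omega), show L.length + 1 + n - L.length = n + 1 by omega,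
        List.getElem?_cons_succ, List.getElem?_append_left (by omega)]
    apply typeOf_eq_of_getElem?_eq
    · rw [entry, entry]
    · intro e he
      rw [entry] at he
      exact hI e (List.mem_of_getElem? he)

/-- The types of the carets before the toggled entry are read off their own (non-right) entries,
and those after it only depend on the common suffix. -/
lemma typeOf_ne_iff_of_right_toggle {L I : List (CaretPos × Bool)} {d d' : Bool}
    {p q : CaretPos × Bool} (hL : ∀ e ∈ L, e.1 ≠ .right) (hI : ∀ e ∈ I, e.1 ≠ .right)
    (hp : p.1 ≠ .right) (hq : q.1 = .right) :
    typeOf (L ++ (.left, d') :: (I ++ q :: S)) i ≠ typeOf (L ++ (.left, d) :: (I ++ p :: S)) i ↔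
      i = L.length + 1 + I.length := by
  rcases lt_trichotomy i (L.length + 1 + I.length) with hlt | rfl | hgt
  · simpa only [hlt.ne, iff_false, not_not] using typeOf_eq_of_lt_of_ne_right hL hI hlt
  · have entry : ∀ (b : Bool) (r : CaretPos × Bool),
        (L ++ (.left, b) :: (I ++ r :: S))[L.length + 1 + I.length]? = some r := by
      intro b r
      rw [List.getElem?_append_right (by omega),
        show L.length + 1 + I.length - L.length = I.length + 1 by omega, List.getElem?_cons_succ,
        List.getElem?_append_right le_rfl]
      simp
    have hj : L.length + 1 + I.length ≠ 0 := by omega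
    simp only [iff_true]
    intro h
    exact hp ((typeOf_isRight_iff hj (entry d p)).mp
      (h ▸ (typeOf_isRight_iff hj (entry d' q)).mpr hq))
  · simp only [hgt.ne', iff_false, not_not]
    have split : ∀ (b : Bool) (r : CaretPos × Bool),
        L ++ (.left, b) :: (I ++ r :: S) = (L ++ (.left, b) :: I ++ [r]) ++ S := by
      simp
    rw [split, split]
    exact typeOf_append_congr (by simp) (by simp; omega)

end CaretTypes

section Rotation

variable {T S : BinTree}

/-- The rotations of the negative tree performed by right multiplication by `x₀` (`root`) and
by `x₁` (`rightChild`). -/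
inductive Rotation : BinTree → BinTree → Prop
  | root (a b c : BinTree) : Rotation (node (node a b) c) (node a (node b c))
  | rightChild (t a b c : BinTree) :
      Rotation (node t (node (node a b) c)) (node t (node a (node b c)))

lemma Rotation.numCarets_eq (h : Rotation T S) : S.numCarets = T.numCarets := by
  cases h <;> simp only [numCarets] <;> omega

lemma ne_right_of_mem_interiorInfo (t : BinTree) : ∀ e ∈ interiorInfo t, e.1 ≠ .right := by
  induction t with
  | leaf => simp [interiorInfo]
  | node l r ihl ihr =>
    simp only [interiorInfo, List.mem_append, List.mem_cons]
    rintro e (h | rfl | h)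
    exacts [ihl e h, nofun, ihr e h]

lemma ne_right_of_mem_leftInfo (t : BinTree) : ∀ e ∈ leftInfo t, e.1 ≠ .right := by
  induction t with
  | leaf => simp [leftInfo]
  | node l r ihl ihr =>
    simp only [leftInfo, List.mem_append, List.mem_cons]
    rintro e (h | rfl | h)
    exacts [ihl e h, nofun, ne_right_of_mem_interiorInfo r e h]

lemma length_interiorInfo (t : BinTree) : (interiorInfo t).length = t.numCarets := by
  induction t with
  | leaf => rfl
  | node l r ihl ihr => simp [interiorInfo, numCarets, ihl, ihr]; omega

lemma length_leftInfo (t : BinTree) : (leftInfo t).length = t.numCarets := by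
  induction t with
  | leaf => rfl
  | node l r ihl ihr => simp [leftInfo, numCarets, ihl, length_interiorInfo]; omega

lemma length_rightInfo (t : BinTree) : (rightInfo t).length = t.numCarets := by
  induction t with
  | leaf => rfl
  | node l r ihl ihr => simp [rightInfo, numCarets, ihr, length_interiorInfo]; omega

lemma length_infoList (t : BinTree) : (infoList t).length = t.numCarets := by
  cases t with
  | leaf => rfl
  | node l r => simp [infoList, numCarets, length_leftInfo, length_rightInfo]; omega

theorem Rotation.existsUnique_caretTypeAt_ne (h : Rotation T S) :
    ∃! i, i < T.numCarets ∧ caretTypeAt S i ≠ caretTypeAt T i := by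
  obtain ⟨L, I, R, d, d', p, q, hL, hI, hp, hq, hT, hS⟩ : ∃ L I R d d' p q,
      (∀ e ∈ L, e.1 ≠ .right) ∧ (∀ e ∈ I, e.1 ≠ .right) ∧ p.1 ≠ .right ∧ q.1 = .right ∧
      infoList T = L ++ (.left, d) :: (I ++ p :: R) ∧
      infoList S = L ++ (.left, d') :: (I ++ q :: R) := by
    cases h with
    | root a b c =>
      exact ⟨leftInfo a, interiorInfo b, rightInfo c, decide (b ≠ .leaf), true,
        (.left, decide (c ≠ .leaf)), (.right, decide (c ≠ .leaf)), ne_right_of_mem_leftInfo a,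
        ne_right_of_mem_interiorInfo b, by simp, rfl,
        by simp only [infoList, leftInfo, List.append_assoc, List.cons_append],
        by simp [infoList, rightInfo]⟩
    | rightChild t a b c =>
      exact ⟨leftInfo t, interiorInfo a, interiorInfo b ++ (.right, decide (c ≠ .leaf)) ::
        rightInfo c, true, true, (.interior, decide (b ≠ .leaf)), (.right, true),
        ne_right_of_mem_leftInfo t, ne_right_of_mem_interiorInfo a, by simp, rfl,
        by simp [infoList, rightInfo, interiorInfo], by simp [infoList, rightInfo]⟩
  have hj : L.length + 1 + I.length < T.numCarets := by
    rw [← length_infoList, hT]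
    simp only [List.length_append, List.length_cons]
    omega
  simp only [caretTypeAt, hT, hS, typeOf_ne_iff_of_right_toggle hL hI hp hq]
  exact ⟨_, ⟨hj, rfl⟩, fun i hi => hi.2⟩

theorem existsUnique_caretTypeAt_ne_of_rotation (h : Rotation T S ∨ Rotation S T) :
    ∃! i, i < T.numCarets ∧ caretTypeAt S i ≠ caretTypeAt T i := by
  rcases h with h | h
  · exact h.existsUnique_caretTypeAt_ne
  · simpa only [ne_comm, h.numCarets_eq] using h.existsUnique_caretTypeAt_ne

end Rotation

section Generators

lemma x_one : x 1 = x1 := by simp [x]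

lemma x_succ {n : ℕ} (hn : n ≠ 0) : x (n + 1) = x0⁻¹ * x n * x0 := by
  obtain ⟨n, rfl⟩ := Nat.exists_eq_succ_of_ne_zero hn
  simp only [x, pow_succ]
  group

lemma inv_mul_x1_mul_eq_of_commute {g : F} (h : Commute (x0 * x1⁻¹) g) :
    x1⁻¹ * g * x1 = x0⁻¹ * g * x0 := by
  have := congrArg (fun y => x0⁻¹ * y * x1) h.eq
  simpa [mul_assoc] using this

lemma commute_x0_mul_x1_inv_x_two : Commute (x0 * x1⁻¹) (x 2) := by
  have h := PresentedGroup.one_of_mem (rels := thompsonRels) (Set.mem_insert _ _)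
  rw [map_commutatorElement, commutatorElement_eq_one_iff_commute] at h
  simpa [x, x0, x1, PresentedGroup.of] using h

lemma commute_x0_mul_x1_inv_x_three : Commute (x0 * x1⁻¹) (x 3) := by
  have h := PresentedGroup.one_of_mem (rels := thompsonRels) (Set.mem_insert_of_mem _ rfl)
  rw [map_commutatorElement, commutatorElement_eq_one_iff_commute] at h
  simpa [x, x0, x1, PresentedGroup.of, pow_succ, mul_assoc] using h

lemma x_conj_succ_succ {i j : ℕ} (hi : i ≠ 0) (hj : j ≠ 0)
    (h : (x i)⁻¹ * x j * x i = x (j + 1)) :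
    (x (i + 1))⁻¹ * x (j + 1) * x (i + 1) = x (j + 2) := by
  rw [x_succ hi, x_succ hj, x_succ (Nat.succ_ne_zero j), ← h]
  group

/-- The relators make conjugation by `x₁` agree with conjugation by `x₀` on `x₂` and `x₃`; for
larger `j`, conjugate `x_j = x₂⁻¹ x_{j-1} x₂` by `x₁`. -/
lemma x_one_conj {j : ℕ} (hj : 2 ≤ j) : x1⁻¹ * x j * x1 = x (j + 1) := by
  induction j using Nat.strong_induction_on with
  | _ j ih =>
    match j, hj with
    | 2, _ => rw [inv_mul_x1_mul_eq_of_commute commute_x0_mul_x1_inv_x_two, x_succ two_ne_zero]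
    | 3, _ => rw [inv_mul_x1_mul_eq_of_commute commute_x0_mul_x1_inv_x_three,
        x_succ three_ne_zero]
    | k + 4, _ =>
      have conj_two : (x 2)⁻¹ * x (k + 3) * x 2 = x (k + 4) :=
        x_conj_succ_succ one_ne_zero (by omega) (x_one ▸ ih (k + 2) (by omega) (by omega))
      have conj_three : (x 3)⁻¹ * x (k + 4) * x 3 = x (k + 5) :=
        x_conj_succ_succ two_ne_zero (by omega) conj_two
      calc x1⁻¹ * x (k + 4) * x1
          = (x1⁻¹ * x 2 * x1)⁻¹ * (x1⁻¹ * x (k + 3) * x1) * (x1⁻¹ * x 2 * x1) := by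
            rw [← conj_two]; group
        _ = x (k + 5) := by
            rw [ih 2 (by omega) le_rfl, ih (k + 3) (by omega) (by omega), conj_three]

lemma x_conj_of_lt {i j : ℕ} (h : i < j) : (x i)⁻¹ * x j * x i = x (j + 1) := by
  induction i generalizing j with
  | zero => rw [x_succ (by omega)]; rfl
  | succ i ih =>
    obtain ⟨j, rfl⟩ := Nat.exists_eq_succ_of_ne_zero (by omega : j ≠ 0)
    rcases Nat.eq_zero_or_pos i with rfl | hi
    · rw [zero_add, x_one]
      exact x_one_conj (by omega)
    · exact x_conj_succ_succ hi.ne' (by omega) (ih (by omega))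

lemma x_mul_x_of_lt {i j : ℕ} (h : i < j) : x j * x i = x i * x (j + 1) := by
  rw [← x_conj_of_lt h]
  group

end Generators

section LeafExponents

def xPowProd (d : ℕ) (L : List ℕ) : F := ((L.zipIdx d).map fun p => x p.2 ^ p.1).prod

@[simp] lemma xPowProd_nil (d : ℕ) : xPowProd d [] = 1 := rfl

lemma xPowProd_cons (d e : ℕ) (L : List ℕ) :
    xPowProd d (e :: L) = x d ^ e * xPowProd (d + 1) L := by
  simp [xPowProd, List.zipIdx_cons]

lemma xPowProd_append (d : ℕ) (L M : List ℕ) :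
    xPowProd d (L ++ M) = xPowProd d L * xPowProd (d + L.length) M := by
  induction L generalizing d with
  | nil => simp
  | cons e L ih =>
    rw [List.cons_append, xPowProd_cons, xPowProd_cons, ih, mul_assoc, List.length_cons,
      Nat.add_right_comm, Nat.add_assoc]

lemma posElt_eq_xPowProd (T : BinTree) : posElt T = xPowProd 0 T.exps := rfl

lemma exists_expsAux_eq_cons (t : BinTree) : ∃ a as, expsAux t = a :: as := by
  induction t with
  | leaf => exact ⟨0, [], rfl⟩
  | node l r ihl ihr =>
    obtain ⟨a, as, hl⟩ := ihl
    exact ⟨a + 1, as ++ expsAux r, by simp [expsAux, hl]⟩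

lemma length_expsAux (t : BinTree) : (expsAux t).length = t.numLeaves := by
  induction t with
  | leaf => rfl
  | node l r ihl ihr =>
    obtain ⟨a, as, hl⟩ := exists_expsAux_eq_cons l
    rw [hl] at ihl
    simp only [expsAux, hl, List.length_append, List.length_cons, numLeaves] at ihl ⊢
    omega

lemma xPowProd_expsAux_node (l r : BinTree) (d : ℕ) :
    xPowProd d (expsAux (node l r)) =
      x d * xPowProd d (expsAux l) * xPowProd (d + l.numLeaves) (expsAux r) := by
  obtain ⟨a, as, hl⟩ := exists_expsAux_eq_cons l
  have hlen : as.length + 1 = l.numLeaves := by simpa [hl] using length_expsAux l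
  rw [expsAux, hl, List.cons_append, xPowProd_cons, xPowProd_append, xPowProd_cons, pow_succ',
    show d + 1 + as.length = d + l.numLeaves by omega]
  group

lemma xPowProd_exps_node (l r : BinTree) (d : ℕ) :
    xPowProd d (exps (node l r)) =
      xPowProd d (expsAux l) * xPowProd (d + l.numLeaves) (exps r) := by
  rw [exps, xPowProd_append, length_expsAux]

lemma x_mul_xPowProd_expsAux (t : BinTree) (d j : ℕ) :
    x (d + j + 1) * xPowProd d (expsAux t) = xPowProd d (expsAux t) * x (d + t.numLeaves + j) := by
  induction t generalizing d j with
  | leaf =>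
    simp only [expsAux, xPowProd_cons, pow_zero, xPowProd_nil, mul_one, one_mul, numLeaves]
    rw [Nat.add_right_comm]
  | node l r ihl ihr =>
    have hr := ihr (d + l.numLeaves) j
    rw [show d + l.numLeaves + r.numLeaves + j = d + (l.numLeaves + r.numLeaves) + j by omega] at hr
    rw [xPowProd_expsAux_node, numLeaves]
    calc x (d + j + 1) * (x d * xPowProd d (expsAux l) * xPowProd (d + l.numLeaves) (expsAux r))
        = x d * (x (d + (j + 1) + 1) * xPowProd d (expsAux l)) *
            xPowProd (d + l.numLeaves) (expsAux r) := by
          rw [← mul_assoc, ← mul_assoc, x_mul_x_of_lt (by omega)]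
          group
      _ = x d * xPowProd d (expsAux l) *
            (x (d + l.numLeaves + j + 1) * xPowProd (d + l.numLeaves) (expsAux r)) := by
          rw [ihl, show d + l.numLeaves + (j + 1) = d + l.numLeaves + j + 1 by omega]
          group
      _ = _ := by rw [hr]; group

lemma posElt_node_node_left (a b c : BinTree) :
    posElt (node (node a b) c) = x0 * posElt (node a (node b c)) := by
  simp only [posElt_eq_xPowProd, exps, xPowProd_append, xPowProd_expsAux_node, length_expsAux,
    numLeaves, Nat.zero_add, mul_assoc]
  rfl

lemma posElt_node_node_right (t a b c : BinTree) :
    posElt (node t (node (node a b) c)) = x1 * posElt (node t (node a (node b c))) := by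
  have hconj : x1 * xPowProd 0 (expsAux t) = xPowProd 0 (expsAux t) * x t.numLeaves := by
    simpa [x_one] using x_mul_xPowProd_expsAux t 0 0
  simp only [posElt_eq_xPowProd, exps, xPowProd_append, xPowProd_expsAux_node, length_expsAux,
    numLeaves, Nat.zero_add, ← mul_assoc, hconj, Nat.add_assoc]

lemma toF_node_node_left_mul_x0 (a b c Tp : BinTree) :
    toF (node (node a b) c) Tp * x0 = toF (node a (node b c)) Tp := by
  rw [toF, toF, posElt_node_node_left]
  group

lemma toF_node_node_right_mul_x1 (t a b c Tp : BinTree) :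
    toF (node t (node (node a b) c)) Tp * x1 = toF (node t (node a (node b c))) Tp := by
  rw [toF, toF, posElt_node_node_right]
  group

end LeafExponents

section LeafAddresses

def leafAddr : BinTree → ℕ → List Bool
  | .leaf, _ => []
  | .node l r, k => if k < l.numLeaves then false :: leafAddr l k
      else true :: leafAddr r (k - l.numLeaves)

variable {l r : BinTree} {k : ℕ}

lemma leafAddr_node_of_lt (h : k < l.numLeaves) : leafAddr (node l r) k = false :: leafAddr l k :=
  if_pos h

lemma leafAddr_node_add (k : ℕ) : leafAddr (node l r) (l.numLeaves + k) = true :: leafAddr r k := by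
  simp [leafAddr]

lemma numLeaves_pos (t : BinTree) : 0 < t.numLeaves := by
  induction t with
  | leaf => exact Nat.one_pos
  | node l r ihl ihr => exact Nat.add_pos_left ihl _

lemma one_lt_numLeaves_node (l r : BinTree) : 1 < (node l r).numLeaves := by
  have := numLeaves_pos l
  have := numLeaves_pos r
  simp only [numLeaves]
  omega

lemma numLeaves_eq_numCarets_add_one (t : BinTree) : t.numLeaves = t.numCarets + 1 := by
  induction t with
  | leaf => rfl
  | node l r ihl ihr => simp only [numLeaves, numCarets, ihl, ihr]; omega

lemma numLeaves_eq_of_numCarets_eq {S T : BinTree} (h : S.numCarets = T.numCarets) :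
    S.numLeaves = T.numLeaves := by
  rw [numLeaves_eq_numCarets_add_one, numLeaves_eq_numCarets_add_one, h]

end LeafAddresses

section CantorAction

open Stream'

lemma prefix_or_prefix_of_appendStream_eq {α : Type*} {w w' : List α} {u u' : Stream' α}
    (h : w ++ₛ u = w' ++ₛ u') : w <+: w' ∨ w' <+: w := by
  induction w generalizing w' with
  | nil => exact .inl List.nil_prefix
  | cons a w ih =>
    cases w' with
    | nil => exact .inr List.nil_prefix
    | cons b w' =>
      rw [cons_append_stream, cons_append_stream] at h
      obtain ⟨rfl, htail⟩ := cons_injective2 h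
      simpa only [List.cons_prefix_cons, true_and] using ih htail

lemma eq_of_forall_appendStream_eq {w w' : List Bool} (h : ∀ s, w ++ₛ s = w' ++ₛ s) : w = w' := by
  induction w generalizing w' with
  | nil =>
    cases w' with
    | nil => rfl
    | cons b w' => simpa using congrArg head (h (const !b))
  | cons a w ih =>
    cases w' with
    | nil => simpa using congrArg head (h (const !a))
    | cons b w' =>
      obtain ⟨rfl, -⟩ := cons_injective2 (h (const false))
      rw [ih fun s => (cons_injective2 (h s)).2]

lemma exists_eq_cons_cons (s : Stream' Bool) :
    ∃ (a b : Bool) (u : Stream' Bool), s = a :: b :: u :=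
  ⟨s.head, s.tail.head, s.tail.tail, by rw [Stream'.eta, Stream'.eta]⟩

/-- `x₀` acting on Cantor space, with `false` for a left and `true` for a right turn:
`0u ↦ 00u`, `10u ↦ 01u`, `11u ↦ 1u`. -/
def x0Perm : Equiv.Perm (Stream' Bool) where
  toFun s := match s.head, s.tail.head with
    | false, _ => false :: s
    | true, false => false :: true :: s.tail.tail
    | true, true => s.tail
  invFun s := match s.head, s.tail.head with
    | true, _ => true :: s
    | false, false => s.tail
    | false, true => true :: false :: s.tail.tail
  left_inv s := by
    obtain ⟨a, b, u, rfl⟩ := exists_eq_cons_cons s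
    cases a <;> cases b <;> rfl
  right_inv s := by
    obtain ⟨a, b, u, rfl⟩ := exists_eq_cons_cons s
    cases a <;> cases b <;> rfl

@[simp] lemma x0Perm_false (u : Stream' Bool) : x0Perm (false :: u) = false :: false :: u := rfl
@[simp] lemma x0Perm_true_false (u : Stream' Bool) :
    x0Perm (true :: false :: u) = false :: true :: u := rfl
@[simp] lemma x0Perm_true_true (u : Stream' Bool) : x0Perm (true :: true :: u) = true :: u := rfl
@[simp] lemma x0Perm_symm_true (u : Stream' Bool) :
    x0Perm.symm (true :: u) = true :: true :: u := rfl
@[simp] lemma x0Perm_symm_false_false (u : Stream' Bool) :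
    x0Perm.symm (false :: false :: u) = false :: u := rfl
@[simp] lemma x0Perm_symm_false_true (u : Stream' Bool) :
    x0Perm.symm (false :: true :: u) = true :: false :: u := rfl

def liftPerm (σ : Equiv.Perm (Stream' Bool)) : Equiv.Perm (Stream' Bool) where
  toFun s := if s.head then true :: σ s.tail else s
  invFun s := if s.head then true :: σ⁻¹ s.tail else s
  left_inv s := by
    obtain ⟨a, u, rfl⟩ : ∃ (a : Bool) (u : Stream' Bool), s = a :: u := ⟨_, _, (Stream'.eta s).symm⟩
    cases a <;> simp
  right_inv s := by
    obtain ⟨a, u, rfl⟩ : ∃ (a : Bool) (u : Stream' Bool), s = a :: u := ⟨_, _, (Stream'.eta s).symm⟩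
    cases a <;> simp

section

variable (σ : Equiv.Perm (Stream' Bool)) (u : Stream' Bool)

@[simp] lemma liftPerm_true : liftPerm σ (true :: u) = true :: σ u := rfl
@[simp] lemma liftPerm_false : liftPerm σ (false :: u) = false :: u := rfl
@[simp] lemma liftPerm_symm_true : (liftPerm σ).symm (true :: u) = true :: σ.symm u := rfl
@[simp] lemma liftPerm_symm_false : (liftPerm σ).symm (false :: u) = false :: u := rfl

lemma x0Perm_inv_mul_liftPerm_mul_x0Perm :
    x0Perm⁻¹ * liftPerm σ * x0Perm = liftPerm (liftPerm σ) := by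
  ext1 s
  obtain ⟨a, b, u, rfl⟩ := exists_eq_cons_cons s
  cases a <;> cases b <;> simp

lemma commute_x0Perm_mul_liftPerm_inv :
    Commute (x0Perm * (liftPerm x0Perm)⁻¹) (liftPerm (liftPerm σ)) := by
  ext1 s
  obtain ⟨a, b, c, u, rfl⟩ : ∃ (a b c : Bool) (u : Stream' Bool), s = a :: b :: c :: u :=
    ⟨s.head, s.tail.head, s.tail.tail.head, s.tail.tail.tail, by simp only [Stream'.eta]⟩
  cases a <;> cases b <;> cases c <;> simp

end

/-- `x₁` acts as `x₀` on the right half `1u`; both relators hold because `x₀x₁⁻¹` commutes with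
everything supported on the quarter `11u`, where `x₀⁻¹x₁x₀` and `x₀⁻²x₁x₀²` act. -/
def cantorRep : F →* Equiv.Perm (Stream' Bool) :=
  PresentedGroup.toGroup (f := ![x0Perm, liftPerm x0Perm]) <| by
    have conj_x1 : x0Perm⁻¹ * liftPerm x0Perm * x0Perm = liftPerm (liftPerm x0Perm) :=
      x0Perm_inv_mul_liftPerm_mul_x0Perm x0Perm
    rintro r (rfl | rfl) <;>
      simp only [map_commutatorElement, map_mul, map_inv, FreeGroup.lift_apply_of,
        Matrix.cons_val_zero, Matrix.cons_val_one, commutatorElement_eq_one_iff_commute]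
    · rw [conj_x1]
      exact commute_x0Perm_mul_liftPerm_inv x0Perm
    · rw [show x0Perm⁻¹ * x0Perm⁻¹ * liftPerm x0Perm * x0Perm * x0Perm =
          x0Perm⁻¹ * (x0Perm⁻¹ * liftPerm x0Perm * x0Perm) * x0Perm by group,
        conj_x1, x0Perm_inv_mul_liftPerm_mul_x0Perm]
      exact commute_x0Perm_mul_liftPerm_inv _

lemma cantorRep_x0 : cantorRep x0 = x0Perm := PresentedGroup.toGroup.of _

lemma cantorRep_x_succ (n : ℕ) : cantorRep (x (n + 1)) = liftPerm (cantorRep (x n)) := by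
  induction n with
  | zero =>
    rw [x_one]
    exact PresentedGroup.toGroup.of _
  | succ n ih =>
    rw [x_succ n.succ_ne_zero, map_mul, map_mul, map_inv, ih, cantorRep_x0,
      x0Perm_inv_mul_liftPerm_mul_x0Perm]

local notation "ones " d:max => List.replicate d true

variable (u : Stream' Bool) {k : ℕ}

lemma ones_succ_append (d : ℕ) : ones (d + 1) ++ₛ u = ones d ++ₛ (true :: u) := by
  rw [List.replicate_succ', append_append_stream]
  rfl

lemma cantorRep_x_zero : cantorRep (x 0) = x0Perm := cantorRep_x0

lemma cantorRep_x_apply_ones_false (d : ℕ) :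
    cantorRep (x d) (ones d ++ₛ false :: u) = ones d ++ₛ false :: false :: u := by
  induction d <;>
    simp_all [cantorRep_x_zero, cantorRep_x_succ, List.replicate_succ, cons_append_stream]

lemma cantorRep_x_apply_ones_succ_false (d : ℕ) :
    cantorRep (x d) (ones (d + 1) ++ₛ false :: u) = ones d ++ₛ false :: true :: u := by
  induction d <;>
    simp_all [cantorRep_x_zero, cantorRep_x_succ, List.replicate_succ, cons_append_stream]

lemma cantorRep_x_apply_ones_add_two (d : ℕ) :
    cantorRep (x d) (ones (d + 2) ++ₛ u) = ones (d + 1) ++ₛ u := by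
  induction d <;>
    simp_all [cantorRep_x_zero, cantorRep_x_succ, List.replicate_succ, cons_append_stream]

lemma cantorRep_x_apply_ones_false_of_lt {d e : ℕ} (h : e < d) :
    cantorRep (x d) (ones e ++ₛ false :: u) = ones e ++ₛ false :: u := by
  induction d generalizing e with
  | zero => omega
  | succ d ih =>
    cases e with
    | zero => simp [cantorRep_x_succ]
    | succ e =>
      simp [cantorRep_x_succ, List.replicate_succ, cons_append_stream, ih (by omega : e < d)]

lemma cantorRep_xPowProd_expsAux_apply_of_lt (t : BinTree) {d e : ℕ} (h : e < d) :
    cantorRep (xPowProd d (expsAux t)) (ones e ++ₛ false :: u) = ones e ++ₛ false :: u := by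
  induction t generalizing d with
  | leaf => simp [expsAux, xPowProd_cons]
  | node l r ihl ihr =>
    simp only [xPowProd_expsAux_node, map_mul, Equiv.Perm.mul_apply]
    rw [ihr (by omega), ihl h, cantorRep_x_apply_ones_false_of_lt _ h]

lemma cantorRep_xPowProd_expsAux_apply_ones (t : BinTree) (d : ℕ) :
    cantorRep (xPowProd d (expsAux t)) (ones (d + t.numLeaves) ++ₛ u) = ones (d + 1) ++ₛ u := by
  induction t generalizing d u with
  | leaf => simp [expsAux, xPowProd_cons, numLeaves]
  | node l r ihl ihr =>
    simp only [xPowProd_expsAux_node, map_mul, Equiv.Perm.mul_apply]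
    rw [numLeaves, ← Nat.add_assoc, ihr, ones_succ_append, ihl, ← ones_succ_append,
      cantorRep_x_apply_ones_add_two]

lemma cantorRep_xPowProd_expsAux_apply_ones_false (t : BinTree) (d : ℕ) (hk : k < t.numLeaves) :
    cantorRep (xPowProd d (expsAux t)) (ones (d + k) ++ₛ false :: u) =
      ones d ++ₛ false :: (leafAddr t k ++ₛ u) := by
  induction t generalizing d k with
  | leaf =>
    obtain rfl : k = 0 := by simpa [numLeaves] using hk
    simp [expsAux, xPowProd_cons, leafAddr]
  | node l r ihl ihr =>
    simp only [xPowProd_expsAux_node, map_mul, Equiv.Perm.mul_apply]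
    rcases lt_or_ge k l.numLeaves with hkl | hkl
    · rw [cantorRep_xPowProd_expsAux_apply_of_lt _ _ (by omega), ihl _ hkl,
        cantorRep_x_apply_ones_false, leafAddr_node_of_lt hkl]
      rfl
    · obtain ⟨k, rfl⟩ := Nat.exists_eq_add_of_le hkl
      rw [numLeaves] at hk
      rw [← Nat.add_assoc, ihr _ (by omega), cantorRep_xPowProd_expsAux_apply_ones,
        cantorRep_x_apply_ones_succ_false, leafAddr_node_add]
      rfl

lemma cantorRep_xPowProd_exps_apply_of_lt (t : BinTree) {d e : ℕ} (h : e < d) :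
    cantorRep (xPowProd d (exps t)) (ones e ++ₛ false :: u) = ones e ++ₛ false :: u := by
  induction t generalizing d with
  | leaf => simp [exps, xPowProd_cons]
  | node l r ihl ihr =>
    rw [xPowProd_exps_node, map_mul, Equiv.Perm.mul_apply, ihr (by omega),
      cantorRep_xPowProd_expsAux_apply_of_lt _ _ h]

/-- `1ᵏ0` and, for the last leaf, `1ᵏ` are the leaf addresses of the right vine: `posElt t` carries
the leaf cylinders of the right vine rigidly onto those of `t`. -/
lemma cantorRep_xPowProd_exps_apply_ones_false (t : BinTree) (d : ℕ) (hk : k + 1 < t.numLeaves) :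
    cantorRep (xPowProd d (exps t)) (ones (d + k) ++ₛ false :: u) =
      ones d ++ₛ (leafAddr t k ++ₛ u) := by
  induction t generalizing d k with
  | leaf => simp [numLeaves] at hk
  | node l r ihl ihr =>
    rw [xPowProd_exps_node, map_mul, Equiv.Perm.mul_apply]
    rcases lt_or_ge k l.numLeaves with hkl | hkl
    · rw [cantorRep_xPowProd_exps_apply_of_lt _ _ (by omega),
        cantorRep_xPowProd_expsAux_apply_ones_false _ _ _ hkl, leafAddr_node_of_lt hkl]
      rfl
    · obtain ⟨k, rfl⟩ := Nat.exists_eq_add_of_le hkl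
      rw [numLeaves] at hk
      rw [← Nat.add_assoc, ihr _ (by omega), cantorRep_xPowProd_expsAux_apply_ones,
        ones_succ_append, leafAddr_node_add]
      rfl

lemma cantorRep_xPowProd_exps_apply_ones (t : BinTree) (d : ℕ) (hk : k + 1 = t.numLeaves) :
    cantorRep (xPowProd d (exps t)) (ones (d + k) ++ₛ u) = ones d ++ₛ (leafAddr t k ++ₛ u) := by
  induction t generalizing d k with
  | leaf =>
    obtain rfl : k = 0 := by simpa [numLeaves] using hk
    simp [exps, xPowProd_cons, leafAddr]
  | node l r ihl ihr =>
    rw [numLeaves] at hk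
    obtain ⟨k, rfl⟩ := Nat.exists_eq_add_of_le (m := l.numLeaves) (n := k)
      (by have := numLeaves_pos r; omega)
    rw [xPowProd_exps_node, map_mul, Equiv.Perm.mul_apply, ← Nat.add_assoc, ihr _ (by omega),
      cantorRep_xPowProd_expsAux_apply_ones, ones_succ_append, leafAddr_node_add]
    rfl

def MapsCylinder (σ : Equiv.Perm (Stream' Bool)) (w v : List Bool) : Prop :=
  ∀ s, σ (w ++ₛ s) = v ++ₛ s

lemma mapsCylinder_cantorRep_toF {A B : BinTree} (h : A.numLeaves = B.numLeaves)
    (hk : k < A.numLeaves) : MapsCylinder (cantorRep (toF A B)) (leafAddr A k) (leafAddr B k) := by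
  intro u
  rw [toF, map_mul, map_inv, Equiv.Perm.mul_apply, posElt_eq_xPowProd, posElt_eq_xPowProd]
  rcases lt_or_ge (k + 1) A.numLeaves with hk1 | hk1
  · have hA := cantorRep_xPowProd_exps_apply_ones_false u A 0 hk1
    have hB := cantorRep_xPowProd_exps_apply_ones_false u B 0 (h ▸ hk1)
    simp only [Nat.zero_add, List.replicate_zero, nil_append_stream] at hA hB
    rw [Equiv.Perm.inv_eq_iff_eq.mpr hA.symm, hB]
  · have hA := cantorRep_xPowProd_exps_apply_ones u A 0 (k := k) (by omega)
    have hB := cantorRep_xPowProd_exps_apply_ones u B 0 (k := k) (by omega)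
    simp only [Nat.zero_add, List.replicate_zero, nil_append_stream] at hA hB
    rw [Equiv.Perm.inv_eq_iff_eq.mpr hA.symm, hB]

lemma MapsCylinder.append {σ : Equiv.Perm (Stream' Bool)} {w v : List Bool}
    (h : MapsCylinder σ w v) (y : List Bool) : MapsCylinder σ (w ++ y) (v ++ y) := fun s => by
  simpa using h (y ++ₛ s)

lemma MapsCylinder.unique {σ : Equiv.Perm (Stream' Bool)} {w v v' : List Bool}
    (h : MapsCylinder σ w v) (h' : MapsCylinder σ w v') : v = v' :=
  eq_of_forall_appendStream_eq fun s => (h s).symm.trans (h' s)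

end CantorAction

section ExposedCarets

variable {T l r : BinTree} {m k : ℕ} {z w : List Bool}

lemma leafAddr_eq_nil (h : leafAddr T k = []) : T = .leaf := by
  cases T with
  | leaf => rfl
  | node l r => unfold leafAddr at h; split_ifs at h

lemma leafAddr_node_eq_false_cons (h : leafAddr (node l r) k = false :: w) :
    k < l.numLeaves ∧ leafAddr l k = w := by
  unfold leafAddr at h
  split_ifs at h with hk
  · exact ⟨hk, (List.cons.inj h).2⟩
  · simp at h

lemma leafAddr_node_eq_true_cons (h : leafAddr (node l r) k = true :: w) :
    l.numLeaves ≤ k ∧ leafAddr r (k - l.numLeaves) = w := by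
  unfold leafAddr at h
  split_ifs at h with hk
  · simp at h
  · exact ⟨not_lt.mp hk, (List.cons.inj h).2⟩

lemma exposedCaretPairs_node (h : l ≠ .leaf ∨ r ≠ .leaf) :
    exposedCaretPairs (node l r) =
      exposedCaretPairs l ++ (exposedCaretPairs r).map (· + l.numLeaves) := by
  rcases l with _ | ⟨l₁, l₂⟩ <;> rcases r with _ | ⟨r₁, r₂⟩
  · simp at h
  all_goals rfl

def IsExposedCaret (T : BinTree) (m : ℕ) (z : List Bool) : Prop :=
  m + 1 < T.numLeaves ∧ leafAddr T m = z ++ [false] ∧ leafAddr T (m + 1) = z ++ [true]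

lemma IsExposedCaret.node_left (h : IsExposedCaret l m z) :
    IsExposedCaret (node l r) m (false :: z) := by
  obtain ⟨hm, h0, h1⟩ := h
  refine ⟨by simp only [numLeaves]; omega, ?_, ?_⟩
  · rw [leafAddr_node_of_lt (by omega), h0, List.cons_append]
  · rw [leafAddr_node_of_lt hm, h1, List.cons_append]

lemma IsExposedCaret.node_right (h : IsExposedCaret r m z) :
    IsExposedCaret (node l r) (l.numLeaves + m) (true :: z) := by
  obtain ⟨hm, h0, h1⟩ := h
  refine ⟨by simp only [numLeaves]; omega, ?_, ?_⟩
  · rw [leafAddr_node_add, h0, List.cons_append]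
  · rw [Nat.add_assoc, leafAddr_node_add, h1, List.cons_append]

lemma IsExposedCaret.mem_exposedCaretPairs (h : IsExposedCaret T m z) :
    m ∈ exposedCaretPairs T := by
  induction T generalizing m z with
  | leaf => exact absurd h.1 (by simp [numLeaves])
  | node l r ihl ihr =>
    obtain ⟨hm, h0, h1⟩ := h
    rw [numLeaves] at hm
    rcases z with _ | ⟨_ | _, z⟩
    · obtain ⟨hml, hl⟩ := leafAddr_node_eq_false_cons h0
      obtain ⟨-, hr⟩ := leafAddr_node_eq_true_cons h1
      obtain rfl := leafAddr_eq_nil hl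
      obtain rfl := leafAddr_eq_nil hr
      simp only [numLeaves] at hml hm
      simp [exposedCaretPairs, show m = 0 by omega]
    · obtain ⟨-, hl0⟩ := leafAddr_node_eq_false_cons h0
      obtain ⟨hml', hl1⟩ := leafAddr_node_eq_false_cons h1
      have hl : l ≠ .leaf := by rintro rfl; simp [numLeaves] at hml'
      rw [exposedCaretPairs_node (.inl hl)]
      exact List.mem_append_left _ (ihl ⟨hml', hl0, hl1⟩)
    · obtain ⟨hml, hr0⟩ := leafAddr_node_eq_true_cons h0
      obtain ⟨-, hr1⟩ := leafAddr_node_eq_true_cons h1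
      rw [show m + 1 - l.numLeaves = m - l.numLeaves + 1 by omega] at hr1
      have hr : r ≠ .leaf := by rintro rfl; simp [numLeaves] at hm; omega
      rw [exposedCaretPairs_node (.inr hr)]
      exact List.mem_append_right _
        (List.mem_map.mpr ⟨_, ihr ⟨by omega, hr0, hr1⟩, Nat.sub_add_cancel hml⟩)

lemma exists_isExposedCaret (hT : T ≠ .leaf) : ∃ m z, IsExposedCaret T m z := by
  induction T with
  | leaf => exact absurd rfl hT
  | node l r ihl ihr =>
    by_cases hl : l = .leaf
    · by_cases hr : r = .leaf
      · subst hl hr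
        exact ⟨0, [], by simp [IsExposedCaret, numLeaves, leafAddr]⟩
      · obtain ⟨m, z, h⟩ := ihr hr
        exact ⟨_, _, h.node_right⟩
    · obtain ⟨m, z, h⟩ := ihl hl
      exact ⟨_, _, h.node_left⟩

lemma exists_isExposedCaret_of_prefix (hk : k < T.numLeaves) (hw : w <+: leafAddr T k)
    (hne : w ≠ leafAddr T k) : ∃ m z, w <+: z ∧ IsExposedCaret T m z := by
  induction T generalizing w k with
  | leaf => exact absurd (List.prefix_nil.mp hw) hne
  | node l r ihl ihr =>
    rcases w with _ | ⟨b, w⟩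
    · obtain ⟨m, z, h⟩ := exists_isExposedCaret (T := node l r) nofun
      exact ⟨m, z, List.nil_prefix, h⟩
    rcases lt_or_ge k l.numLeaves with hkl | hkl
    · rw [leafAddr_node_of_lt hkl] at hw hne
      obtain ⟨rfl, hw'⟩ := List.cons_prefix_cons.mp hw
      obtain ⟨m, z, hz, h⟩ := ihl hkl hw' (by simpa using hne)
      exact ⟨m, _, List.cons_prefix_cons.mpr ⟨rfl, hz⟩, h.node_left⟩
    · obtain ⟨k, rfl⟩ := Nat.exists_eq_add_of_le hkl
      rw [leafAddr_node_add] at hw hne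
      obtain ⟨rfl, hw'⟩ := List.cons_prefix_cons.mp hw
      obtain ⟨m, z, hz, h⟩ := ihr (k := k) (by simp only [numLeaves] at hk; omega) hw'
        (by simpa using hne)
      exact ⟨_, _, List.cons_prefix_cons.mpr ⟨rfl, hz⟩, h.node_right⟩

end ExposedCarets

section Uniqueness

lemma exists_leafAddr_prefix (T : BinTree) (s : Stream' Bool) :
    ∃ k < T.numLeaves, ∃ u, s = leafAddr T k ++ₛ u := by
  induction T generalizing s with
  | leaf => exact ⟨0, Nat.one_pos, s, rfl⟩
  | node l r ihl ihr =>
    rw [← Stream'.eta s]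
    cases s.head
    · obtain ⟨k, hk, u, hu⟩ := ihl s.tail
      exact ⟨k, by simp only [numLeaves]; omega, u, by rw [leafAddr_node_of_lt hk, hu]; rfl⟩
    · obtain ⟨k, hk, u, hu⟩ := ihr s.tail
      exact ⟨l.numLeaves + k, by simp only [numLeaves]; omega, u,
        by rw [leafAddr_node_add, hu]; rfl⟩

def Refines (A T : BinTree) : Prop :=
  ∀ j < T.numLeaves, ∃ k < A.numLeaves, leafAddr A k <+: leafAddr T j

lemma Refines.of_node {a₁ a₂ t₁ t₂ : BinTree} (h : Refines (node a₁ a₂) (node t₁ t₂)) :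
    Refines a₁ t₁ ∧ Refines a₂ t₂ := by
  constructor
  · intro j hj
    obtain ⟨k, hk, hpre⟩ := h j (by simp only [numLeaves]; omega)
    rw [leafAddr_node_of_lt hj] at hpre
    rcases lt_or_ge k a₁.numLeaves with hka | hka
    · rw [leafAddr_node_of_lt hka, List.cons_prefix_cons] at hpre
      exact ⟨k, hka, hpre.2⟩
    · obtain ⟨k, rfl⟩ := Nat.exists_eq_add_of_le hka
      simp [leafAddr_node_add] at hpre
  · intro j hj
    obtain ⟨k, hk, hpre⟩ := h (t₁.numLeaves + j) (by simp only [numLeaves]; omega)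
    rw [leafAddr_node_add] at hpre
    rcases lt_or_ge k a₁.numLeaves with hka | hka
    · simp [leafAddr_node_of_lt hka] at hpre
    · obtain ⟨k, rfl⟩ := Nat.exists_eq_add_of_le hka
      rw [leafAddr_node_add, List.cons_prefix_cons] at hpre
      exact ⟨k, by simp only [numLeaves] at hk; omega, hpre.2⟩

lemma Refines.numLeaves_le {A T : BinTree} (h : Refines A T) : A.numLeaves ≤ T.numLeaves := by
  induction A generalizing T with
  | leaf => exact numLeaves_pos T
  | node a₁ a₂ ih₁ ih₂ =>
    cases T with
    | leaf =>
      obtain ⟨k, -, hpre⟩ := h 0 Nat.one_pos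
      exact absurd (leafAddr_eq_nil (List.prefix_nil.mp hpre)) nofun
    | node t₁ t₂ =>
      have := ih₁ h.of_node.1
      have := ih₂ h.of_node.2
      simp only [numLeaves]
      omega

lemma Refines.eq {A T : BinTree} (h : Refines A T) (hn : A.numLeaves = T.numLeaves) : A = T := by
  induction A generalizing T with
  | leaf =>
    cases T with
    | leaf => rfl
    | node t₁ t₂ => exact absurd hn (one_lt_numLeaves_node t₁ t₂).ne
  | node a₁ a₂ ih₁ ih₂ =>
    cases T with
    | leaf => exact absurd hn (one_lt_numLeaves_node a₁ a₂).ne'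
    | node t₁ t₂ =>
      have h₁ := h.of_node.1.numLeaves_le
      have h₂ := h.of_node.2.numLeaves_le
      simp only [numLeaves] at hn
      rw [ih₁ h.of_node.1 (by omega), ih₂ h.of_node.2 (by omega)]

/-- If `P` did not refine `A`, a caret of `A` exposed below a leaf of `P` would be carried rigidly
to an exposed caret of `B` at the same leaf numbers, so `(A, B)` would not be reduced. -/
lemma refines_of_toF_eq {A B P Q : BinTree} (hAB : IsReducedPair A B)
    (hPQ : P.numLeaves = Q.numLeaves) (h : toF A B = toF P Q) : Refines A P := by
  have hAB' := numLeaves_eq_of_numCarets_eq hAB.1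
  intro j hj
  have hP := h ▸ mapsCylinder_cantorRep_toF hPQ hj
  obtain ⟨k, hk, u, hu⟩ := exists_leafAddr_prefix A (leafAddr P j ++ₛ Stream'.const false)
  rcases prefix_or_prefix_of_appendStream_eq hu with hc | hc
  · by_cases heq : leafAddr P j = leafAddr A k
    · exact ⟨k, hk, heq ▸ List.prefix_rfl⟩
    obtain ⟨m, _, ⟨y, rfl⟩, hm⟩ := exists_isExposedCaret_of_prefix hk hc heq
    have transfer : ∀ i b, i < A.numLeaves → leafAddr A i = leafAddr P j ++ y ++ [b] →
        leafAddr B i = leafAddr Q j ++ y ++ [b] := fun i b hi hAi =>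
      (mapsCylinder_cantorRep_toF hAB' hi).unique <| by
        simpa only [hAi, List.append_assoc] using hP.append (y ++ [b])
    have hmB : IsExposedCaret B m (leafAddr Q j ++ y) :=
      ⟨hAB' ▸ hm.1, transfer m false (by have := hm.1; omega) hm.2.1, transfer _ true hm.1 hm.2.2⟩
    exact absurd ⟨hm.mem_exposedCaretPairs, hmB.mem_exposedCaretPairs⟩ (hAB.2 m)
  · exact ⟨k, hk, hc⟩

theorem eq_of_toF_eq {A B P Q : BinTree} (hAB : IsReducedPair A B)
    (hPQ : P.numCarets = Q.numCarets) (hAP : A.numCarets = P.numCarets)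
    (h : toF A B = toF P Q) : A = P ∧ B = Q := by
  have hPQ' := numLeaves_eq_of_numCarets_eq hPQ
  have hAB' := numLeaves_eq_of_numCarets_eq hAB.1
  obtain rfl := (refines_of_toF_eq hAB hPQ' h).eq (numLeaves_eq_of_numCarets_eq hAP)
  refine ⟨rfl, Refines.eq (fun j hj => ⟨j, by omega, ?_⟩) (hAB'.symm.trans hPQ')⟩
  have hj' : j < A.numLeaves := by omega
  rw [(mapsCylinder_cantorRep_toF hAB' hj').unique (h ▸ mapsCylinder_cantorRep_toF hPQ' hj')]

end Uniqueness

lemma exists_rotation_toF_eq_mul {Tm : BinTree} (Tp : BinTree) {α : F}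
    (hα : (α = x0 ∧ Tm.leftSubtree ≠ BinTree.leaf) ∨
          (α = x0⁻¹ ∧ Tm.rightSubtree ≠ BinTree.leaf) ∨
          (α = x1 ∧ Tm.rightSubtree.leftSubtree ≠ BinTree.leaf) ∨
          (α = x1⁻¹ ∧ Tm.rightSubtree.rightSubtree ≠ BinTree.leaf)) :
    ∃ S, (Rotation Tm S ∨ Rotation S Tm) ∧ toF S Tp = toF Tm Tp * α := by
  rcases hα with ⟨rfl, hne⟩ | ⟨rfl, hne⟩ | ⟨rfl, hne⟩ | ⟨rfl, hne⟩
  · rcases Tm with _ | ⟨_ | ⟨a, b⟩, c⟩ <;> try exact absurd rfl hne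
    exact ⟨_, .inl (.root a b c), (toF_node_node_left_mul_x0 a b c Tp).symm⟩
  · rcases Tm with _ | ⟨a, _ | ⟨b, c⟩⟩ <;> try exact absurd rfl hne
    exact ⟨_, .inr (.root a b c), eq_mul_inv_of_mul_eq (toF_node_node_left_mul_x0 a b c Tp)⟩
  · rcases Tm with _ | ⟨t, _ | ⟨_ | ⟨a, b⟩, c⟩⟩ <;> try exact absurd rfl hne
    exact ⟨_, .inl (.rightChild t a b c), (toF_node_node_right_mul_x1 t a b c Tp).symm⟩
  · rcases Tm with _ | ⟨t, _ | ⟨a, _ | ⟨b, c⟩⟩⟩ <;> try exact absurd rfl hne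
    exact ⟨_, .inr (.rightChild t a b c),
      eq_mul_inv_of_mul_eq (toF_node_node_right_mul_x1 t a b c Tp)⟩

/-- Fordham, Lemma 2.3.1. Under the condition corresponding
to the generator `α`, if the reduced tree pair diagram of `w·α` also has `m+1`
carets, then exactly one pair of caret types changes. -/
theorem exactly_one_caret_pair_changes (w : F) (m : ℕ) (Tm Tp Sm Sp : BinTree) (α : F)
    (hred : IsReducedPair Tm Tp) (hrepr : toF Tm Tp = w)
    (hTm : Tm.numCarets = m + 1)
    (hα : (α = x0 ∧ Tm.leftSubtree ≠ BinTree.leaf) ∨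
          (α = x0⁻¹ ∧ Tm.rightSubtree ≠ BinTree.leaf) ∨
          (α = x1 ∧ Tm.rightSubtree.leftSubtree ≠ BinTree.leaf) ∨
          (α = x1⁻¹ ∧ Tm.rightSubtree.rightSubtree ≠ BinTree.leaf))
    (hred' : IsReducedPair Sm Sp) (hrepr' : toF Sm Sp = w * α)
    (hSm : Sm.numCarets = m + 1) :
    ∃! i : ℕ, i ≤ m ∧
      (caretTypeAt Sm i, caretTypeAt Sp i) ≠ (caretTypeAt Tm i, caretTypeAt Tp i) := by
  subst hrepr
  obtain ⟨S, hrot, hS⟩ := exists_rotation_toF_eq_mul Tp hα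
  have hSc : S.numCarets = Tm.numCarets := hrot.elim Rotation.numCarets_eq (·.numCarets_eq.symm)
  obtain ⟨rfl, rfl⟩ :=
    eq_of_toF_eq hred' (hSc.trans hred.1) (by rw [hSm, hSc, hTm]) (hrepr'.trans hS.symm)
  simpa [Prod.ext_iff, Nat.lt_succ_iff, hTm] using existsUnique_caretTypeAt_ne_of_rotation hrot

end Thompson
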